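/- arXiv:2008.00268 — 2 statements merged into one kernel-verified Lean document; each statement's English description precedes it below -/
import Mathlib

section
/- If T is a balanced tree and E is a subtree of T, then there exists a strong subtree S of T such that E ⊆ S and L_T(E) = L_T(S). -/
/-!
Let `r` be the root of `E` and `L = L_T(E)`. Grow `S` from `r` through the levels in `L`: at a
node `s` on level `l ∈ L`, every immediate successor `t` of `s` in `T` is continued to one chosen
node above `t` on the next level of `L`, taken below some node of `E` whenever possible.
Membership in `S` is then a condition on the branch below a node, which makes `S` closed under
meets, and the defining properties of a strong subtree are built in. Since `E` is closed under
meets, two nodes above `t` on the next level of `L` that both lie below nodes of `E` coincide;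
so along `E` the choices are forced, and `E ⊆ S`.
-/

open scoped Classical

section AbstractTrees

variable {α : Type*} [PartialOrder α]

/-- The set of strict predecessors of `t` inside `U`. -/
def predsIn (U : Set α) (t : α) : Set α := {s ∈ U | s < t}

/-- The level of a node `t` in the tree `U`: the number of its strict predecessors in `U`. -/
noncomputable def levelIn (U : Set α) (t : α) : ℕ := (predsIn U t).ncard

/-- `U` is a tree: the set of strict predecessors of every node is finite and
linearly ordered. -/
def IsTreeOn (U : Set α) : Prop :=
  ∀ t ∈ U, (predsIn U t).Finite ∧
    ∀ s₁ ∈ predsIn U t, ∀ s₂ ∈ predsIn U t, s₁ ≤ s₂ ∨ s₂ ≤ s₁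

/-- The height of the tree `U`: the least `n` such that `U` has no node of level `n`
(equivalently, for trees, the supremum of `level + 1`), or `ω = ⊤` if there is no such `n`. -/
noncomputable def heightIn (U : Set α) : ℕ∞ :=
  ⨆ t ∈ U, ((levelIn U t : ℕ∞) + 1)

/-- The level set `L_U(D)` of `D` in `U`. -/
def levelSetIn (U D : Set α) : Set ℕ := levelIn U '' D

/-- `t` is a maximal node of `U`. -/
def IsMaximalIn (U : Set α) (t : α) : Prop := t ∈ U ∧ ∀ s ∈ U, ¬ t < s

/-- `U` is rooted: it has a unique minimal element below all of its nodes. -/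
def IsRootedIn (U : Set α) : Prop := ∃ r ∈ U, ∀ t ∈ U, r ≤ t

/-- `U` is balanced: either it has infinite height and no maximal nodes, or all its
maximal nodes lie on level `h(U) - 1`. -/
def IsBalanced (U : Set α) : Prop :=
  (heightIn U = ⊤ ∧ ∀ t, ¬ IsMaximalIn U t) ∨
  (heightIn U ≠ ⊤ ∧ ∀ t, IsMaximalIn U t → ((levelIn U t : ℕ∞) + 1 = heightIn U))

/-- `m` is the meet `s ∧_U t` of `s` and `t` in `U`. -/
def IsMeetIn (U : Set α) (s t m : α) : Prop :=
  m ∈ U ∧ m ≤ s ∧ m ≤ t ∧ ∀ m' ∈ U, m' ≤ s → m' ≤ t → m' ≤ m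

/-- `S` is a subtree of `U`: a subset closed under binary meets (taken in `U`). -/
def IsSubtreeOf (U S : Set α) : Prop :=
  S ⊆ U ∧ ∀ s ∈ S, ∀ t ∈ S, ∃ m ∈ S, IsMeetIn U s t m

/-- `t` is an immediate successor of `s` in `U`. -/
def IsImmSuccIn (U : Set α) (s t : α) : Prop :=
  s ∈ U ∧ t ∈ U ∧ s < t ∧ ∀ u ∈ U, s < u → ¬ u < t

/-- `U` is finitely branching. -/
def IsFinBranching (U : Set α) : Prop :=
  ∀ t ∈ U, {s | IsImmSuccIn U t s}.Finite

/-- `S` is a strong subtree of `U`: it is a subtree which is either empty, or is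
rooted, balanced, has each of its levels contained in a single level of `U`, and for every
non-maximal node `s ∈ S` and every immediate successor `t` of `s` in `U` there is exactly
one immediate successor of `s` in `S` above `t`. -/
def IsStrongSubtreeOf (U S : Set α) : Prop :=
  IsSubtreeOf U S ∧
  (S = ∅ ∨
    (IsRootedIn S ∧ IsBalanced S ∧
      (∀ s ∈ S, ∀ t ∈ S, levelIn S s = levelIn S t → levelIn U s = levelIn U t) ∧
      (∀ s ∈ S, ¬ IsMaximalIn S s → ∀ t, IsImmSuccIn U s t →
        ∃! c, IsImmSuccIn S s c ∧ t ≤ c)))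

end AbstractTrees

section Trees

variable {α : Type*} [PartialOrder α] {U E : Set α} {r s t u v x y : α}

lemma predsIn_mono (h : s ≤ t) : predsIn U s ⊆ predsIn U t :=
  fun _ hx => ⟨hx.1, hx.2.trans_le h⟩

lemma le_heightIn (ht : t ∈ U) : (levelIn U t : ℕ∞) + 1 ≤ heightIn U :=
  le_iSup₂ (f := fun t _ => (levelIn U t : ℕ∞) + 1) t ht

lemma levelIn_lt_heightIn (ht : t ∈ U) : (levelIn U t : ℕ∞) < heightIn U :=
  ((ENat.lt_add_one_iff (ENat.natCast_ne_top _)).2 le_rfl).trans_le (le_heightIn ht)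

namespace IsTreeOn

lemma mono (htree : IsTreeOn U) {S : Set α} (hSU : S ⊆ U) : IsTreeOn S := by
  intro t ht
  have hsub : predsIn S t ⊆ predsIn U t := fun _ hx => ⟨hSU hx.1, hx.2⟩
  exact ⟨(htree t (hSU ht)).1.subset hsub,
    fun s₁ h₁ s₂ h₂ => (htree t (hSU ht)).2 s₁ (hsub h₁) s₂ (hsub h₂)⟩

lemma levelIn_mono (htree : IsTreeOn U) (ht : t ∈ U) (h : s ≤ t) :
    levelIn U s ≤ levelIn U t :=
  Set.ncard_le_ncard (predsIn_mono h) (htree t ht).1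

lemma levelIn_lt (htree : IsTreeOn U) (ht : t ∈ U) (hs : s ∈ U) (h : s < t) :
    levelIn U s < levelIn U t := by
  have hfin : (predsIn U s).Finite := (htree t ht).1.subset (predsIn_mono h.le)
  have hsub : insert s (predsIn U s) ⊆ predsIn U t :=
    Set.insert_subset ⟨hs, h⟩ (predsIn_mono h.le)
  have hle := Set.ncard_le_ncard hsub (htree t ht).1
  rwa [Set.ncard_insert_of_notMem (fun hx => hx.2.false) hfin] at hle

lemma le_total_of_le (htree : IsTreeOn U) (ht : t ∈ U) (hs : s ∈ U) (hu : u ∈ U)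
    (hst : s ≤ t) (hut : u ≤ t) : s ≤ u ∨ u ≤ s := by
  rcases hst.lt_or_eq with hst | rfl
  · rcases hut.lt_or_eq with hut | rfl
    · exact (htree t ht).2 s ⟨hs, hst⟩ u ⟨hu, hut⟩
    · exact Or.inl hst.le
  · exact Or.inr hut

lemma le_of_levelIn_le (htree : IsTreeOn U) (ht : t ∈ U) (hx : x ∈ U) (hy : y ∈ U)
    (hxt : x ≤ t) (hyt : y ≤ t) (h : levelIn U x ≤ levelIn U y) : x ≤ y := by
  rcases htree.le_total_of_le ht hx hy hxt hyt with hxy | hyx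
  · exact hxy
  · rcases hyx.lt_or_eq with hyx | rfl
    · exact absurd h (htree.levelIn_lt hx hy hyx).not_ge
    · exact le_rfl

lemma eq_of_levelIn_eq (htree : IsTreeOn U) (ht : t ∈ U) (hx : x ∈ U) (hy : y ∈ U)
    (hxt : x ≤ t) (hyt : y ≤ t) (h : levelIn U x = levelIn U y) : x = y :=
  (htree.le_of_levelIn_le ht hx hy hxt hyt h.le).antisymm
    (htree.le_of_levelIn_le ht hy hx hyt hxt h.ge)

lemma exists_isLeast (htree : IsTreeOn U) (ht : t ∈ U) {C : Set α} (hCU : C ⊆ U)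
    (hCt : ∀ x ∈ C, x ≤ t) (hC : C.Nonempty) : ∃ m, IsLeast C m := by
  have hfin : C.Finite := ((htree t ht).1.insert t).subset fun x hx =>
    (hCt x hx).eq_or_lt.imp id fun h => ⟨hCU hx, h⟩
  obtain ⟨m, hm, hmin⟩ := hfin.exists_minimal hC
  refine ⟨m, hm, fun x hx => ?_⟩
  exact (htree.le_total_of_le ht (hCU hm) (hCU hx) (hCt m hm) (hCt x hx)).elim id (hmin hx)

lemma exists_isGreatest (htree : IsTreeOn U) (ht : t ∈ U) {C : Set α} (hCU : C ⊆ U)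
    (hCt : ∀ x ∈ C, x ≤ t) (hC : C.Nonempty) : ∃ m, IsGreatest C m := by
  have hfin : C.Finite := ((htree t ht).1.insert t).subset fun x hx =>
    (hCt x hx).eq_or_lt.imp id fun h => ⟨hCU hx, h⟩
  obtain ⟨m, hm, hmax⟩ := hfin.exists_maximal hC
  refine ⟨m, hm, fun x hx => ?_⟩
  exact (htree.le_total_of_le ht (hCU hx) (hCU hm) (hCt x hx) (hCt m hm)).elim id (hmax hx)

lemma levelIn_of_isImmSuccIn (htree : IsTreeOn U) (h : IsImmSuccIn U t v) :
    levelIn U v = levelIn U t + 1 := by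
  obtain ⟨ht, hv, htv, hcov⟩ := h
  have heq : predsIn U v = insert t (predsIn U t) := by
    ext x
    refine ⟨fun hx => ?_, ?_⟩
    · rcases htree.le_total_of_le hv hx.1 ht hx.2.le htv.le with hxt | htx
      · exact hxt.eq_or_lt.imp id fun h => ⟨hx.1, h⟩
      · rcases htx.eq_or_lt with rfl | htx
        · exact Or.inl rfl
        · exact absurd hx.2 (hcov x hx.1 htx)
    · rintro (rfl | hx)
      · exact ⟨ht, htv⟩
      · exact predsIn_mono htv.le hx
  rw [levelIn, heq, Set.ncard_insert_of_notMem (fun hx => hx.2.false)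
    ((htree v hv).1.subset (predsIn_mono htv.le))]
  rfl

lemma exists_isImmSuccIn_of_levelIn_pos (htree : IsTreeOn U) (ht : t ∈ U)
    (h : 0 < levelIn U t) : ∃ p, IsImmSuccIn U p t := by
  obtain ⟨p, ⟨hp, hpt⟩, hmax⟩ := htree.exists_isGreatest ht (C := predsIn U t)
    (fun _ hx => hx.1) (fun _ hx => hx.2.le) ((Set.ncard_pos (htree t ht).1).1 h)
  exact ⟨p, hp, ht, hpt, fun u hu hpu hut => (hmax ⟨hu, hut⟩).not_gt hpu⟩

lemma exists_le_levelIn_eq (htree : IsTreeOn U) (ht : t ∈ U) {n : ℕ}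
    (hn : n ≤ levelIn U t) : ∃ s ∈ U, s ≤ t ∧ levelIn U s = n := by
  obtain ⟨k, hk⟩ : ∃ k, levelIn U t = n + k := ⟨_, (Nat.add_sub_cancel' hn).symm⟩
  induction k generalizing t with
  | zero => exact ⟨t, ht, le_rfl, hk⟩
  | succ k ih =>
    obtain ⟨p, hp⟩ := htree.exists_isImmSuccIn_of_levelIn_pos ht (by omega)
    have hpl := htree.levelIn_of_isImmSuccIn hp
    obtain ⟨s, hs, hsp, hsl⟩ := ih hp.1 (by omega) (by omega)
    exact ⟨s, hs, hsp.trans hp.2.2.1.le, hsl⟩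

lemma exists_isImmSuccIn_le (htree : IsTreeOn U) (ht : t ∈ U) (hu : u ∈ U) (htu : t < u) :
    ∃ v, IsImmSuccIn U t v ∧ v ≤ u := by
  obtain ⟨v, ⟨hv, htv, hvu⟩, hmin⟩ := htree.exists_isLeast hu (C := {v ∈ U | t < v ∧ v ≤ u})
    (fun _ h => h.1) (fun _ h => h.2.2) ⟨u, hu, htu, le_rfl⟩
  exact ⟨v, ⟨ht, hv, htv, fun w hw htw hwv => (hmin ⟨hw, htw, hwv.le.trans hvu⟩).not_gt hwv⟩, hvu⟩

lemma isImmSuccIn_unique (htree : IsTreeOn U) (hu : u ∈ U) {v₁ v₂ : α}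
    (h₁ : IsImmSuccIn U t v₁) (h₂ : IsImmSuccIn U t v₂) (hv₁ : v₁ ≤ u) (hv₂ : v₂ ≤ u) :
    v₁ = v₂ :=
  htree.eq_of_levelIn_eq hu h₁.2.1 h₂.2.1 hv₁ hv₂ <| by
    rw [htree.levelIn_of_isImmSuccIn h₁, htree.levelIn_of_isImmSuccIn h₂]

lemma exists_isMeetIn (htree : IsTreeOn U) (hs : s ∈ U) (hr : r ∈ U) (hrs : r ≤ s)
    (hrt : r ≤ t) : ∃ m, IsMeetIn U s t m := by
  obtain ⟨m, ⟨hm, hms, hmt⟩, hmax⟩ := htree.exists_isGreatest hs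
    (C := {x ∈ U | x ≤ s ∧ x ≤ t}) (fun _ h => h.1) (fun _ h => h.2.1) ⟨r, hr, hrs, hrt⟩
  exact ⟨m, hm, hms, hmt, fun m' hm' h₁ h₂ => hmax ⟨hm', h₁, h₂⟩⟩

end IsTreeOn

lemma IsBalanced.exists_gt (hbal : IsBalanced U) (ht : t ∈ U)
    (h : (levelIn U t : ℕ∞) + 1 < heightIn U) : ∃ u ∈ U, t < u := by
  by_contra! hmax
  rcases hbal with ⟨-, hnone⟩ | ⟨-, hlevel⟩
  · exact hnone t ⟨ht, hmax⟩
  · exact h.ne (hlevel t ⟨ht, hmax⟩)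

lemma IsBalanced.exists_ge_levelIn_eq (hbal : IsBalanced U) (htree : IsTreeOn U) (ht : t ∈ U)
    {n : ℕ} (htn : levelIn U t ≤ n) (hn : (n : ℕ∞) < heightIn U) :
    ∃ s ∈ U, t ≤ s ∧ levelIn U s = n := by
  obtain ⟨k, hk⟩ : ∃ k, n = levelIn U t + k := ⟨_, (Nat.add_sub_cancel' htn).symm⟩
  induction k generalizing t with
  | zero => exact ⟨t, ht, le_rfl, hk.symm⟩
  | succ k ih =>
    have hroom : (levelIn U t : ℕ∞) + 1 < heightIn U :=
      lt_of_le_of_lt (by exact_mod_cast (by omega : levelIn U t + 1 ≤ n)) hn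
    obtain ⟨u, hu, htu⟩ := hbal.exists_gt ht hroom
    obtain ⟨v, hv, -⟩ := htree.exists_isImmSuccIn_le ht hu htu
    have hvl := htree.levelIn_of_isImmSuccIn hv
    obtain ⟨s, hs, hvs, hsn⟩ := ih hv.2.1 (by omega) (by omega)
    exact ⟨s, hs, hv.2.2.1.le.trans hvs, hsn⟩

lemma IsSubtreeOf.exists_isLeast (hE : IsSubtreeOf U E) (htree : IsTreeOn U)
    (hne : E.Nonempty) : ∃ r, IsLeast E r := by
  obtain ⟨e, he⟩ := hne
  obtain ⟨r, ⟨hr, hre⟩, hmin⟩ := htree.exists_isLeast (hE.1 he) (C := {x ∈ E | x ≤ e})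
    (fun _ h => hE.1 h.1) (fun _ h => h.2) ⟨e, he, le_rfl⟩
  refine ⟨r, hr, fun t ht => ?_⟩
  obtain ⟨m, hm, hmeet⟩ := hE.2 e he t ht
  exact (hmin ⟨hm, hmeet.2.1⟩).trans hmeet.2.2.1

lemma IsTreeOn.isBalanced_of_forall_exists_gt (htree : IsTreeOn U) (hne : U.Nonempty)
    (h : ∀ t ∈ U, ∃ c ∈ U, t < c) : IsBalanced U := by
  have hgrow : ∀ k : ℕ, ∃ s ∈ U, k ≤ levelIn U s := by
    intro k
    induction k with
    | zero => obtain ⟨s, hs⟩ := hne; exact ⟨s, hs, Nat.zero_le _⟩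
    | succ k ih =>
      obtain ⟨s, hs, hks⟩ := ih
      obtain ⟨c, hc, hsc⟩ := h s hs
      exact ⟨c, hc, hks.trans_lt (htree.levelIn_lt hc hs hsc)⟩
  refine Or.inl ⟨ENat.eq_top_iff_forall_gt.2 fun k => ?_, fun t ht => ?_⟩
  · obtain ⟨s, hs, hks⟩ := hgrow k
    exact (Nat.cast_le.2 hks).trans_lt (levelIn_lt_heightIn hs)
  · obtain ⟨c, hc, htc⟩ := h t ht.1
    exact ht.2 c hc htc

lemma isBalanced_of_levelIn_le (hs : s ∈ U) (hle : ∀ t ∈ U, levelIn U t ≤ levelIn U s)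
    (hmax : ∀ t, IsMaximalIn U t → levelIn U t = levelIn U s) : IsBalanced U := by
  have hheight : heightIn U = levelIn U s + 1 :=
    le_antisymm (iSup₂_le fun t ht => by gcongr; exact hle t ht) (le_heightIn hs)
  refine Or.inr ⟨?_, fun t ht => by rw [hmax t ht, hheight]⟩
  rw [hheight]
  exact_mod_cast ENat.natCast_ne_top (levelIn U s + 1)

end Trees

section PickedSubtree

variable {α : Type*} [PartialOrder α] {U : Set α} {L : Set ℕ} {pick : α → ℕ → α}
  {r s t u v a c m : α} {l k n : ℕ}

noncomputable def ancestorAt (U : Set α) (t : α) (n : ℕ) : α :=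
  if h : ∃ s ∈ U, s ≤ t ∧ levelIn U s = n then h.choose else t

lemma ancestorAt_spec (htree : IsTreeOn U) (ht : t ∈ U) (hn : n ≤ levelIn U t) :
    ancestorAt U t n ∈ U ∧ ancestorAt U t n ≤ t ∧ levelIn U (ancestorAt U t n) = n := by
  have h := htree.exists_le_levelIn_eq ht hn
  rw [ancestorAt, dif_pos h]
  exact h.choose_spec

lemma ancestorAt_eq (htree : IsTreeOn U) (ht : t ∈ U) (hs : s ∈ U) (hst : s ≤ t) :
    ancestorAt U t (levelIn U s) = s := by
  obtain ⟨ha, hat, hal⟩ := ancestorAt_spec htree ht (htree.levelIn_mono ht hst)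
  exact htree.eq_of_levelIn_eq ht ha hs hat hst hal

lemma ancestorAt_of_le (htree : IsTreeOn U) (ht : t ∈ U) (hc : c ∈ U) (hct : c ≤ t)
    (hn : n ≤ levelIn U c) : ancestorAt U c n = ancestorAt U t n := by
  obtain ⟨ha, hac, hal⟩ := ancestorAt_spec htree hc hn
  have h := ancestorAt_eq htree ht ha (hac.trans hct)
  rw [hal] at h
  exact h.symm

lemma ancestorAt_lt (htree : IsTreeOn U) (ht : t ∈ U) (hn : n < levelIn U t) :
    ancestorAt U t n < t := by
  obtain ⟨-, hat, hal⟩ := ancestorAt_spec htree ht hn.le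
  exact hat.lt_of_ne fun h => by rw [h] at hal; omega

noncomputable def immSuccToward (U : Set α) (a u : α) : α :=
  if h : ∃ v, IsImmSuccIn U a v ∧ v ≤ u then h.choose else a

lemma immSuccToward_spec (htree : IsTreeOn U) (ha : a ∈ U) (hu : u ∈ U) (hau : a < u) :
    IsImmSuccIn U a (immSuccToward U a u) ∧ immSuccToward U a u ≤ u := by
  have h := htree.exists_isImmSuccIn_le ha hu hau
  rw [immSuccToward, dif_pos h]
  exact h.choose_spec

lemma immSuccToward_eq (htree : IsTreeOn U) (hu : u ∈ U) (hv : IsImmSuccIn U a v)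
    (hvu : v ≤ u) : immSuccToward U a u = v := by
  have h : ∃ v, IsImmSuccIn U a v ∧ v ≤ u := ⟨v, hv, hvu⟩
  rw [immSuccToward, dif_pos h]
  exact htree.isImmSuccIn_unique hu h.choose_spec.1 hv h.choose_spec.2 hvu

lemma immSuccToward_of_le (htree : IsTreeOn U) (ha : a ∈ U) (hc : c ∈ U) (hu : u ∈ U)
    (hac : a < c) (hcu : c ≤ u) : immSuccToward U a c = immSuccToward U a u := by
  obtain ⟨hv, hvc⟩ := immSuccToward_spec htree ha hc hac
  exact (immSuccToward_eq htree hu hv (hvc.trans hcu)).symm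

noncomputable def nextIn (L : Set ℕ) (l : ℕ) : ℕ := sInf {m ∈ L | l < m}

lemma nextIn_mem (h : ∃ m ∈ L, l < m) : nextIn L l ∈ L := (Nat.sInf_mem h).1

lemma lt_nextIn (h : ∃ m ∈ L, l < m) : l < nextIn L l := (Nat.sInf_mem h).2

lemma nextIn_le (hk : k ∈ L) (hlk : l < k) : nextIn L l ≤ k := Nat.sInf_le ⟨hk, hlk⟩

lemma strictMonoOn_ncard_setOf_lt (L : Set ℕ) : StrictMonoOn (fun n => {l ∈ L | l < n}.ncard) L :=
  fun _ hm _ _ hmn => Set.ncard_lt_ncard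
    ⟨fun _ hx => ⟨hx.1, hx.2.trans hmn⟩, fun h => (h ⟨hm, hmn⟩).2.false⟩
    ((Set.finite_Iio _).subset fun _ hx => hx.2)

lemma monotone_ncard_setOf_lt (L : Set ℕ) : Monotone (fun n => {l ∈ L | l < n}.ncard) :=
  fun _ _ hmn => Set.ncard_le_ncard (fun _ hx => ⟨hx.1, hx.2.trans_le hmn⟩)
    ((Set.finite_Iio _).subset fun _ hx => hx.2)

def IsLevelPicker (U : Set α) (L : Set ℕ) (pick : α → ℕ → α) : Prop :=
  ∀ t ∈ U, ∀ n ∈ L, levelIn U t ≤ n → pick t n ∈ U ∧ t ≤ pick t n ∧ levelIn U (pick t n) = n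

def FollowsPickAt (U : Set α) (L : Set ℕ) (pick : α → ℕ → α) (s : α) (l : ℕ) : Prop :=
  ancestorAt U s (nextIn L l) = pick (immSuccToward U (ancestorAt U s l) s) (nextIn L l)

/-- The strong subtree grown from `r` through the levels `L`: a branch that leaves the level
`l ∈ L` through the immediate successor `t` must continue to `pick t (nextIn L l)`. -/
def pickedSubtree (U : Set α) (L : Set ℕ) (r : α) (pick : α → ℕ → α) : Set α :=
  {s | s ∈ U ∧ r ≤ s ∧ levelIn U s ∈ L ∧ ∀ l ∈ L, l < levelIn U s → FollowsPickAt U L pick s l}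

lemma followsPickAt_iff_of_le (htree : IsTreeOn U) (hs : s ∈ U) (hc : c ∈ U) (hcs : c ≤ s)
    (hl : l < levelIn U c) (hn : nextIn L l ≤ levelIn U c) :
    FollowsPickAt U L pick c l ↔ FollowsPickAt U L pick s l := by
  have ha := (ancestorAt_spec htree hc hl.le).1
  unfold FollowsPickAt
  rw [immSuccToward_of_le htree ha hc hs (ancestorAt_lt htree hc hl) hcs,
    ancestorAt_of_le htree hs hc hcs hn, ancestorAt_of_le htree hs hc hcs hl.le]

lemma root_mem_pickedSubtree (hr : r ∈ U) (hrL : IsLeast L (levelIn U r)) :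
    r ∈ pickedSubtree U L r pick :=
  ⟨hr, le_rfl, hrL.1, fun _ hl hlr => absurd (hrL.2 hl) hlr.not_ge⟩

lemma ancestorAt_mem_pickedSubtree (htree : IsTreeOn U) (hr : r ∈ U)
    (hrL : levelIn U r ∈ lowerBounds L) (hs : s ∈ pickedSubtree U L r pick) (hl : l ∈ L)
    (hls : l ≤ levelIn U s) : ancestorAt U s l ∈ pickedSubtree U L r pick := by
  obtain ⟨ha, has, hal⟩ := ancestorAt_spec htree hs.1 hls
  generalize ancestorAt U s l = a at ha has hal ⊢
  subst hal
  refine ⟨ha, htree.le_of_levelIn_le hs.1 hr ha hs.2.1 has (hrL hl), hl, fun l' hl' hl'a => ?_⟩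
  exact (followsPickAt_iff_of_le htree hs.1 ha has hl'a (nextIn_le hl hl'a)).2
    (hs.2.2.2 l' hl' (hl'a.trans_le hls))

lemma levelIn_pickedSubtree (htree : IsTreeOn U) (hr : r ∈ U) (hrL : levelIn U r ∈ lowerBounds L)
    (hs : s ∈ pickedSubtree U L r pick) :
    levelIn (pickedSubtree U L r pick) s = {l ∈ L | l < levelIn U s}.ncard := by
  have hpreds : predsIn (pickedSubtree U L r pick) s =
      ancestorAt U s '' {l ∈ L | l < levelIn U s} := by
    ext x
    constructor
    · rintro ⟨hx, hxs⟩
      exact ⟨levelIn U x, ⟨hx.2.2.1, htree.levelIn_lt hs.1 hx.1 hxs⟩,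
        ancestorAt_eq htree hs.1 hx.1 hxs.le⟩
    · rintro ⟨l, ⟨hl, hls⟩, rfl⟩
      exact ⟨ancestorAt_mem_pickedSubtree htree hr hrL hs hl hls.le,
        ancestorAt_lt htree hs.1 hls⟩
  rw [levelIn, hpreds, Set.InjOn.ncard_image]
  intro l₁ hl₁ l₂ hl₂ h
  calc l₁ = levelIn U (ancestorAt U s l₁) := (ancestorAt_spec htree hs.1 hl₁.2.le).2.2.symm
    _ = levelIn U (ancestorAt U s l₂) := by rw [h]
    _ = l₂ := (ancestorAt_spec htree hs.1 hl₂.2.le).2.2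

lemma pick_mem_pickedSubtree (htree : IsTreeOn U) (hpick : IsLevelPicker U L pick)
    (hs : s ∈ pickedSubtree U L r pick) (hst : IsImmSuccIn U s t) (hsL : ∃ m ∈ L, levelIn U s < m) :
    pick t (nextIn L (levelIn U s)) ∈ pickedSubtree U L r pick := by
  have htl := htree.levelIn_of_isImmSuccIn hst
  obtain ⟨hc, htc, hcl⟩ := hpick t hst.2.1 _ (nextIn_mem hsL) (by rw [htl]; exact lt_nextIn hsL)
  have hsc : s ≤ pick t (nextIn L (levelIn U s)) := (hst.2.2.1.trans_le htc).le
  refine ⟨hc, hs.2.1.trans hsc, by rw [hcl]; exact nextIn_mem hsL, fun l hl hlc => ?_⟩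
  rw [hcl] at hlc
  rcases lt_trichotomy l (levelIn U s) with hls | rfl | hsl
  · exact (followsPickAt_iff_of_le htree hc hs.1 hsc hls (nextIn_le hs.2.2.1 hls)).1
      (hs.2.2.2 l hl hls)
  · have hcc := ancestorAt_eq htree hc hc le_rfl
    rw [hcl] at hcc
    unfold FollowsPickAt
    rw [ancestorAt_eq htree hc hs.1 hsc, immSuccToward_eq htree hc hst htc, hcc]
  · exact absurd (nextIn_le hl hsl) hlc.not_ge

lemma exists_gt_mem_pickedSubtree (htree : IsTreeOn U) (hpick : IsLevelPicker U L pick)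
    (hs : s ∈ pickedSubtree U L r pick) (hsL : ∃ m ∈ L, levelIn U s < m) :
    ∃ c ∈ pickedSubtree U L r pick, s < c ∧ levelIn U c = nextIn L (levelIn U s) := by
  obtain ⟨hu, hsu, hul⟩ := hpick s hs.1 _ (nextIn_mem hsL) (lt_nextIn hsL).le
  obtain ⟨t, hst, -⟩ := htree.exists_isImmSuccIn_le hs.1 hu
    (hsu.lt_of_ne fun h => (lt_nextIn hsL).ne (by rw [← hul, ← h]))
  obtain ⟨-, htc, hcl⟩ := hpick t hst.2.1 _ (nextIn_mem hsL)
    (by rw [htree.levelIn_of_isImmSuccIn hst]; exact lt_nextIn hsL)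
  exact ⟨_, pick_mem_pickedSubtree htree hpick hs hst hsL, hst.2.2.1.trans_le htc, hcl⟩

lemma exists_ge_mem_pickedSubtree (htree : IsTreeOn U) (hpick : IsLevelPicker U L pick)
    (hs : s ∈ pickedSubtree U L r pick) (hl : l ∈ L) (hsl : levelIn U s ≤ l) :
    ∃ c ∈ pickedSubtree U L r pick, s ≤ c ∧ levelIn U c = l := by
  obtain ⟨k, hk⟩ : ∃ k, l - levelIn U s ≤ k := ⟨_, le_rfl⟩
  induction k generalizing s with
  | zero => exact ⟨s, hs, le_rfl, by omega⟩
  | succ k ih =>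
    rcases hsl.lt_or_eq with hsl | hsl
    · have hsL : ∃ m ∈ L, levelIn U s < m := ⟨l, hl, hsl⟩
      obtain ⟨c, hc, hsc, hcl⟩ := exists_gt_mem_pickedSubtree htree hpick hs hsL
      have := lt_nextIn hsL
      have := nextIn_le hl hsl
      obtain ⟨d, hd, hcd, hdl⟩ := ih hc (by omega) (by omega)
      exact ⟨d, hd, hsc.le.trans hcd, hdl⟩
    · exact ⟨s, hs, le_rfl, hsl⟩

/-- Otherwise, with `l` the last level of `L` below `m`, the branches of `s` and `t` would agree
up to the level `nextIn L l > levelIn U m`, contradicting that `m` is their meet. -/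
lemma levelIn_mem_of_isMeetIn (htree : IsTreeOn U) (hr : r ∈ U) (hrL : levelIn U r ∈ L)
    (hs : s ∈ pickedSubtree U L r pick) (ht : t ∈ pickedSubtree U L r pick)
    (hm : IsMeetIn U s t m) (hms : levelIn U m < levelIn U s) (hmt : levelIn U m < levelIn U t) :
    levelIn U m ∈ L := by
  by_contra hmL
  obtain ⟨l, ⟨hl, hlm⟩, hmax⟩ : ∃ l, IsGreatest {l ∈ L | l ≤ levelIn U m} l :=
    BddAbove.exists_isGreatest_of_nonempty ⟨levelIn U m, fun _ h => h.2⟩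
      ⟨_, hrL, htree.levelIn_mono hm.1 (hm.2.2.2 r hr hs.2.1 ht.2.1)⟩
  have hlm : l < levelIn U m := hlm.lt_of_ne fun h => hmL (h ▸ hl)
  have ham := ancestorAt_lt htree hm.1 hlm
  have ha := (ancestorAt_spec htree hm.1 hlm.le).1
  have hsame : ∀ x ∈ pickedSubtree U L r pick, m ≤ x → l < levelIn U x →
      ancestorAt U x (nextIn L l) =
        pick (immSuccToward U (ancestorAt U m l) m) (nextIn L l) := fun x hx hmx hlx => by
    rw [hx.2.2.2 l hl hlx, ← ancestorAt_of_le htree hx.1 hm.1 hmx hlm.le,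
      immSuccToward_of_le htree ha hm.1 hx.1 ham hmx]
  have hls := hlm.trans hms
  have hlt := hlm.trans hmt
  obtain ⟨hb, hbs, hbl⟩ := ancestorAt_spec htree hs.1 (nextIn_le hs.2.2.1 hls)
  have hbt := (ancestorAt_spec htree ht.1 (nextIn_le ht.2.2.1 hlt)).2.1
  rw [hsame t ht hm.2.2.1 hlt, ← hsame s hs hm.2.1 hls] at hbt
  have hbm := htree.levelIn_mono hm.1 (hm.2.2.2 _ hb hbs hbt)
  rw [hbl] at hbm
  have hsL : ∃ m ∈ L, l < m := ⟨_, hs.2.2.1, hls⟩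
  exact (lt_nextIn hsL).not_ge (hmax ⟨nextIn_mem hsL, hbm⟩)

lemma isSubtreeOf_pickedSubtree (htree : IsTreeOn U) (hr : r ∈ U)
    (hrL : IsLeast L (levelIn U r)) : IsSubtreeOf U (pickedSubtree U L r pick) := by
  refine ⟨fun s hs => hs.1, fun s hs t ht => ?_⟩
  obtain ⟨m, hm⟩ := htree.exists_isMeetIn hs.1 hr hs.2.1 ht.2.1
  refine ⟨m, ?_, hm⟩
  rcases (htree.levelIn_mono hs.1 hm.2.1).lt_or_eq with hms | hms
  · rcases (htree.levelIn_mono ht.1 hm.2.2.1).lt_or_eq with hmt | hmt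
    · rw [← ancestorAt_eq htree hs.1 hm.1 hm.2.1]
      exact ancestorAt_mem_pickedSubtree htree hr hrL.2 hs
        (levelIn_mem_of_isMeetIn htree hr hrL.1 hs ht hm hms hmt) hms.le
    · rwa [htree.eq_of_levelIn_eq ht.1 hm.1 ht.1 hm.2.2.1 le_rfl hmt]
  · rwa [htree.eq_of_levelIn_eq hs.1 hm.1 hs.1 hm.2.1 le_rfl hms]

lemma isImmSuccIn_pickedSubtree_iff (htree : IsTreeOn U) (hr : r ∈ U)
    (hrL : levelIn U r ∈ lowerBounds L) (hs : s ∈ pickedSubtree U L r pick)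
    (hc : c ∈ pickedSubtree U L r pick) :
    IsImmSuccIn (pickedSubtree U L r pick) s c ↔ s < c ∧ levelIn U c = nextIn L (levelIn U s) := by
  constructor
  · rintro ⟨-, -, hsc, hcov⟩
    have hslc := htree.levelIn_lt hc.1 hs.1 hsc
    have hsL : ∃ m ∈ L, levelIn U s < m := ⟨_, hc.2.2.1, hslc⟩
    have hnc := nextIn_le hc.2.2.1 hslc
    refine ⟨hsc, (hnc.lt_or_eq.resolve_left fun hlt => ?_).symm⟩
    obtain ⟨hw, hwc, hwl⟩ := ancestorAt_spec htree hc.1 hnc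
    have hsw : s ≤ ancestorAt U c (nextIn L (levelIn U s)) :=
      htree.le_of_levelIn_le hc.1 hs.1 hw hsc.le hwc (by rw [hwl]; exact (lt_nextIn hsL).le)
    refine hcov _ (ancestorAt_mem_pickedSubtree htree hr hrL hc (nextIn_mem hsL) hnc)
      (hsw.lt_of_ne fun h => ?_) (ancestorAt_lt htree hc.1 hlt)
    have hl := congrArg (levelIn U) h
    rw [hwl] at hl
    exact (lt_nextIn hsL).ne hl
  · rintro ⟨hsc, hcl⟩
    refine ⟨hs, hc, hsc, fun v hv hsv hvc => ?_⟩
    have := nextIn_le hv.2.2.1 (htree.levelIn_lt hv.1 hs.1 hsv)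
    have := htree.levelIn_lt hc.1 hv.1 hvc
    omega

lemma existsUnique_isImmSuccIn_pickedSubtree (htree : IsTreeOn U)
    (hpick : IsLevelPicker U L pick) (hr : r ∈ U) (hrL : levelIn U r ∈ lowerBounds L)
    (hs : s ∈ pickedSubtree U L r pick) (hsL : ∃ m ∈ L, levelIn U s < m)
    (hst : IsImmSuccIn U s t) : ∃! c, IsImmSuccIn (pickedSubtree U L r pick) s c ∧ t ≤ c := by
  have hc := pick_mem_pickedSubtree htree hpick hs hst hsL
  obtain ⟨-, htc, hcl⟩ := hpick t hst.2.1 _ (nextIn_mem hsL)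
    (by rw [htree.levelIn_of_isImmSuccIn hst]; exact lt_nextIn hsL)
  refine ⟨_, ⟨(isImmSuccIn_pickedSubtree_iff htree hr hrL hs hc).2
    ⟨hst.2.2.1.trans_le htc, hcl⟩, htc⟩, ?_⟩
  rintro c ⟨hsc, htc'⟩
  have hc' := hsc.2.1
  obtain ⟨hsc, hcl'⟩ := (isImmSuccIn_pickedSubtree_iff htree hr hrL hs hc').1 hsc
  have hcc := ancestorAt_eq htree hc'.1 hc'.1 le_rfl
  rw [hcl'] at hcc
  have hfollow := hc'.2.2.2 _ hs.2.2.1 (htree.levelIn_lt hc'.1 hs.1 hsc)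
  unfold FollowsPickAt at hfollow
  rwa [ancestorAt_eq htree hc'.1 hs.1 hsc.le, immSuccToward_eq htree hc'.1 hst htc', hcc]
    at hfollow

lemma isBalanced_pickedSubtree (htree : IsTreeOn U) (hpick : IsLevelPicker U L pick)
    (hr : r ∈ U) (hrL : IsLeast L (levelIn U r)) : IsBalanced (pickedSubtree U L r pick) := by
  have hrS := root_mem_pickedSubtree (pick := pick) hr hrL
  by_cases hbdd : ∃ lmax, IsGreatest L lmax
  · obtain ⟨lmax, hlmax, hle⟩ := hbdd
    obtain ⟨smax, hsmax, -, hsmaxl⟩ :=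
      exists_ge_mem_pickedSubtree htree hpick hrS hlmax (hrL.2 hlmax)
    refine isBalanced_of_levelIn_le hsmax (fun t ht => ?_) (fun t ht => ?_)
    · rw [levelIn_pickedSubtree htree hr hrL.2 ht, levelIn_pickedSubtree htree hr hrL.2 hsmax,
        hsmaxl]
      exact monotone_ncard_setOf_lt L (hle ht.2.2.1)
    · have htl : levelIn U t = lmax := by
        by_contra hne
        obtain ⟨c, hc, htc, -⟩ := exists_gt_mem_pickedSubtree htree hpick ht.1
          ⟨lmax, hlmax, (hle ht.1.2.2.1).lt_of_ne hne⟩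
        exact ht.2 c hc htc
      rw [levelIn_pickedSubtree htree hr hrL.2 ht.1, levelIn_pickedSubtree htree hr hrL.2 hsmax,
        htl, hsmaxl]
  · refine (htree.mono fun s hs => hs.1).isBalanced_of_forall_exists_gt ⟨r, hrS⟩ fun t ht => ?_
    obtain ⟨l, hl, htl⟩ : ∃ l ∈ L, levelIn U t < l := by
      by_contra! h
      exact hbdd ⟨_, ht.2.2.1, h⟩
    obtain ⟨c, hc, htc, -⟩ := exists_gt_mem_pickedSubtree htree hpick ht ⟨l, hl, htl⟩
    exact ⟨c, hc, htc⟩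

theorem isStrongSubtreeOf_pickedSubtree (htree : IsTreeOn U) (hpick : IsLevelPicker U L pick)
    (hr : r ∈ U) (hrL : IsLeast L (levelIn U r)) :
    IsStrongSubtreeOf U (pickedSubtree U L r pick) := by
  refine ⟨isSubtreeOf_pickedSubtree htree hr hrL, Or.inr ⟨⟨r, root_mem_pickedSubtree hr hrL,
    fun t ht => ht.2.1⟩, isBalanced_pickedSubtree htree hpick hr hrL,
    fun s hs t ht hst => ?_, fun s hs hsmax t hst => ?_⟩⟩
  · rw [levelIn_pickedSubtree htree hr hrL.2 hs, levelIn_pickedSubtree htree hr hrL.2 ht] at hst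
    exact (strictMonoOn_ncard_setOf_lt L).injOn hs.2.2.1 ht.2.2.1 hst
  · have hsL : ∃ m ∈ L, levelIn U s < m := by
      by_contra! h
      exact hsmax ⟨hs, fun c hc hsc => (h _ hc.2.2.1).not_gt (htree.levelIn_lt hc.1 hs.1 hsc)⟩
    exact existsUnique_isImmSuccIn_pickedSubtree htree hpick hr hrL.2 hs hsL hst

end PickedSubtree

section Extension

variable {α : Type*} [PartialOrder α] {U E : Set α} {r t c₁ c₂ e₁ e₂ : α} {n : ℕ}

noncomputable def pickAbove (U E : Set α) (t : α) (n : ℕ) : α :=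
  if h : ∃ x ∈ U, t ≤ x ∧ levelIn U x = n ∧ ∃ e ∈ E, x ≤ e then h.choose
  else if h' : ∃ x ∈ U, t ≤ x ∧ levelIn U x = n then h'.choose else t

lemma pickAbove_spec (h : ∃ x ∈ U, t ≤ x ∧ levelIn U x = n) :
    pickAbove U E t n ∈ U ∧ t ≤ pickAbove U E t n ∧ levelIn U (pickAbove U E t n) = n := by
  by_cases hE : ∃ x ∈ U, t ≤ x ∧ levelIn U x = n ∧ ∃ e ∈ E, x ≤ e
  · rw [pickAbove, dif_pos hE]
    exact ⟨hE.choose_spec.1, hE.choose_spec.2.1, hE.choose_spec.2.2.1⟩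
  · rw [pickAbove, dif_neg hE, dif_pos h]
    exact h.choose_spec

lemma exists_pickAbove_le (h : ∃ x ∈ U, t ≤ x ∧ levelIn U x = n ∧ ∃ e ∈ E, x ≤ e) :
    ∃ e ∈ E, pickAbove U E t n ≤ e := by
  rw [pickAbove, dif_pos h]
  exact h.choose_spec.2.2.2

lemma isLevelPicker_pickAbove (htree : IsTreeOn U) (hbal : IsBalanced U) (hEU : E ⊆ U) :
    IsLevelPicker U (levelSetIn U E) (pickAbove U E) := by
  rintro t ht _ ⟨e, he, rfl⟩ hte
  exact pickAbove_spec (hbal.exists_ge_levelIn_eq htree ht hte (levelIn_lt_heightIn (hEU he)))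

lemma IsSubtreeOf.eq_of_levelIn_eq (hE : IsSubtreeOf U E) (htree : IsTreeOn U) (ht : t ∈ U)
    (hc₁ : c₁ ∈ U) (hc₂ : c₂ ∈ U) (htc₁ : t ≤ c₁) (htc₂ : t ≤ c₂) (he₁ : e₁ ∈ E)
    (he₂ : e₂ ∈ E) (hce₁ : c₁ ≤ e₁) (hce₂ : c₂ ≤ e₂) (hl : levelIn U c₁ = levelIn U c₂)
    (hgap : ∀ m ∈ levelSetIn U E, levelIn U t ≤ m → levelIn U c₁ ≤ m) : c₁ = c₂ := by
  obtain ⟨m, hmE, hm, hme₁, hme₂, hmax⟩ := hE.2 e₁ he₁ e₂ he₂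
  have hcm := hgap _ ⟨m, hmE, rfl⟩ (htree.levelIn_mono hm (hmax t ht (htc₁.trans hce₁)
    (htc₂.trans hce₂)))
  have hc₁m := htree.le_of_levelIn_le (hE.1 he₁) hc₁ hm hce₁ hme₁ hcm
  have hc₂m := htree.le_of_levelIn_le (hE.1 he₂) hc₂ hm hce₂ hme₂ (hl ▸ hcm)
  exact htree.eq_of_levelIn_eq hm hc₁ hc₂ hc₁m hc₂m hl

lemma subset_pickedSubtree_pickAbove (htree : IsTreeOn U) (hE : IsSubtreeOf U E)
    (hr : r ∈ lowerBounds E) : E ⊆ pickedSubtree U (levelSetIn U E) r (pickAbove U E) := by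
  intro e he
  have heU := hE.1 he
  have heL : levelIn U e ∈ levelSetIn U E := ⟨e, he, rfl⟩
  refine ⟨heU, hr he, heL, fun l hl hle => ?_⟩
  have hlL : ∃ m ∈ levelSetIn U E, l < m := ⟨_, heL, hle⟩
  obtain ⟨ha, -, hal⟩ := ancestorAt_spec htree heU hle.le
  obtain ⟨hb, hbe, hbl⟩ := ancestorAt_spec htree heU (nextIn_le heL hle)
  obtain ⟨ht, hte⟩ := immSuccToward_spec htree ha heU (ancestorAt_lt htree heU hle)
  have htl := htree.levelIn_of_isImmSuccIn ht
  rw [hal] at htl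
  have htb := htree.le_of_levelIn_le heU ht.2.1 hb hte hbe (by rw [htl, hbl]; exact lt_nextIn hlL)
  obtain ⟨hp, htp, hpl⟩ := pickAbove_spec (E := E) ⟨_, hb, htb, hbl⟩
  obtain ⟨e', he', hpe'⟩ := exists_pickAbove_le ⟨_, hb, htb, hbl, e, he, hbe⟩
  refine hE.eq_of_levelIn_eq htree ht.2.1 hb hp htb htp he he' hbe hpe' (hbl.trans hpl.symm)
    fun m hm htm => ?_
  rw [hbl]
  exact nextIn_le hm (by omega)

end Extension

theorem subtree_extends_to_strong_subtree_general {α : Type*} [PartialOrder α]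
    (U : Set α) (htree : IsTreeOn U)
    (hbal : IsBalanced U) (E : Set α) (hE : IsSubtreeOf U E) :
    ∃ S : Set α, IsStrongSubtreeOf U S ∧ E ⊆ S ∧ levelSetIn U E = levelSetIn U S := by
  rcases E.eq_empty_or_nonempty with rfl | hne
  · exact ⟨∅, ⟨⟨Set.empty_subset _, by simp⟩, Or.inl rfl⟩, subset_rfl, rfl⟩
  obtain ⟨r, hrE, hr⟩ := hE.exists_isLeast htree hne
  have hrL : IsLeast (levelSetIn U E) (levelIn U r) :=
    ⟨⟨r, hrE, rfl⟩, by rintro _ ⟨e, he, rfl⟩; exact htree.levelIn_mono (hE.1 he) (hr he)⟩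
  have hES := subset_pickedSubtree_pickAbove htree hE hr
  refine ⟨_, isStrongSubtreeOf_pickedSubtree htree (isLevelPicker_pickAbove htree hbal hE.1)
    (hE.1 hrE) hrL, hES, (Set.image_mono hES).antisymm ?_⟩
  rintro _ ⟨s, hs, rfl⟩
  exact hs.2.2.1

/-- If `E` is a subtree of a balanced tree `T`, then there is a strong subtree
`S ⊇ E` of `T` with `L_T(E) = L_T(S)`. -/
theorem subtree_extends_to_strong_subtree {α : Type*} [PartialOrder α]
    (U : Set α) (htree : IsTreeOn U) (hroot : U.Nonempty → IsRootedIn U)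
    (hbal : IsBalanced U) (E : Set α) (hE : IsSubtreeOf U E) :
    ∃ S : Set α, IsStrongSubtreeOf U S ∧ E ⊆ S ∧ levelSetIn U E = levelSetIn U S :=
  subtree_extends_to_strong_subtree_general U htree hbal E hE
end

section
/- For every k ∈ ℕ there exists R(k) ∈ ℕ such that the following holds: for every 3-uniform hypergraph H with vertex set ℕ and every set S ⊆ ℕ with |S| = k, there exists a valuation tree of height at most R(k) containing all the matrices A^i for i ∈ S. -/
open scoped Classical

/-- A finite `{0,1}`-vector: a function `len → Bool`, represented with total entry
function which vanishes from index `len` on. Nodes of the tree `T₁`. -/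
structure Vec where
  len : ℕ
  entry : ℕ → Bool
  outside : ∀ i, len ≤ i → entry i = false

/-- A finite strictly lower triangular square `{0,1}`-matrix: a function
`size × size → Bool` with `entry i j = 0` for `i ≤ j`, represented with a total entry
function which vanishes outside. Nodes of the tree `T₂`. -/
structure Mat where
  size : ℕ
  entry : ℕ → ℕ → Bool
  lower : ∀ i j, i ≤ j → entry i j = false
  outside : ∀ i j, size ≤ i → entry i j = false

/-- The tree order on `T₁`: end-extension of finite `{0,1}`-vectors. -/
instance : PartialOrder Vec where
  le u v := u.len ≤ v.len ∧ ∀ i, i < u.len → u.entry i = v.entry i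
  le_refl u := ⟨le_rfl, fun _ _ => rfl⟩
  le_trans u v w h h' :=
    ⟨h.1.trans h'.1, fun i hi => (h.2 i hi).trans (h'.2 i (lt_of_lt_of_le hi h.1))⟩
  le_antisymm u v h h' := by
    have hl : u.len = v.len := le_antisymm h.1 h'.1
    have he : u.entry = v.entry := by
      funext i
      by_cases hi : i < u.len
      · exact h.2 i hi
      · rw [u.outside i (not_lt.mp hi), v.outside i (by omega)]
    cases u; cases v
    simp only at hl he
    subst hl; subst he; rfl

/-- The tree order on `T₂`: extension of strictly lower triangular `{0,1}`-matrices. -/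
instance : PartialOrder Mat where
  le A B := A.size ≤ B.size ∧ ∀ i j, i < A.size → j < A.size → A.entry i j = B.entry i j
  le_refl A := ⟨le_rfl, fun _ _ _ _ => rfl⟩
  le_trans A B C h h' :=
    ⟨h.1.trans h'.1, fun i j hi hj => (h.2 i j hi hj).trans
      (h'.2 i j (lt_of_lt_of_le hi h.1) (lt_of_lt_of_le hj h.1))⟩
  le_antisymm A B h h' := by
    have hl : A.size = B.size := le_antisymm h.1 h'.1
    have he : A.entry = B.entry := by
      funext i j
      by_cases hi : i < A.size
      · by_cases hj : j < A.size
        · exact h.2 i j hi hj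
        · -- j ≥ A.size and i < A.size, so i < j and both entries vanish
          rw [A.lower i j (by omega), B.lower i j (by omega)]
      · rw [A.outside i j (not_lt.mp hi), B.outside i j (by omega)]
    cases A; cases B
    simp only at hl he
    subst hl; subst he; rfl

/-- The extension `A⌢v` of an `n × n` matrix `A` by a vector `v` of length `n`:
the `(n+1) × (n+1)` matrix extending `A` whose last row is `v` followed by `0` and whose
last column is zero. -/
def matExtend (A : Mat) (v : Vec) : Mat where
  size := A.size + 1
  entry := fun i j =>
    if i < A.size then A.entry i j
    else if i = A.size ∧ j < A.size then v.entry j else false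
  lower := by
    intro i j hij
    by_cases h1 : i < A.size
    · simp only [if_pos h1]
      exact A.lower i j hij
    · show (if i < A.size then A.entry i j
          else if i = A.size ∧ j < A.size then v.entry j else false) = false
      rw [if_neg h1, if_neg (by omega)]
  outside := by
    intro i j hi
    show (if i < A.size then A.entry i j
        else if i = A.size ∧ j < A.size then v.entry j else false) = false
    rw [if_neg (by omega), if_neg (by omega)]

/-- The `m`-th row of a matrix `A`, as a `{0,1}`-vector of length `|A|`. -/
def rowOf (A : Mat) (m : ℕ) : Vec where
  len := A.size
  entry := fun l => A.entry m l
  outside := by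
    intro l hl
    rcases le_or_gt m l with h | h
    · exact A.lower m l h
    · exact A.outside m l (hl.trans h.le)
/-- A 3-uniform hypergraph on a vertex set `V`: a set of hyperedges, each a 3-element
subset of `V`. -/
structure HGraph (V : Type*) where
  edges : Set (Finset V)
  card_eq : ∀ e ∈ edges, e.card = 3

/-- An embedding of 3-uniform hypergraphs: an injective map `f` between the vertex sets
such that `{x, y, z}` is a hyperedge if and only if `{f x, f y, f z}` is a hyperedge. -/
def IsHGEmbedding {V W : Type*} (A : HGraph V) (B : HGraph W) (f : V → W) : Prop :=
  Function.Injective f ∧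
    ∀ x y z : V, ({x, y, z} : Finset V) ∈ A.edges ↔ ({f x, f y, f z} : Finset W) ∈ B.edges

/-- The 3-uniform hypergraph `G`: its vertices are the nodes of the tree `T₂`
(i.e. finite strictly lower triangular `{0,1}`-matrices), and `{A, B, C}` is a hyperedge
if and only if `|A| < |B| < |C|` and `C_{|B|, |A|} = 1`. -/
noncomputable def Ghyp : HGraph Mat where
  edges := {e | ∃ A B C : Mat, e = {A, B, C} ∧
    A.size < B.size ∧ B.size < C.size ∧ C.entry B.size A.size = true}
  card_eq := by
    rintro e ⟨A, B, C, rfl, h1, h2, -⟩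
    refine Finset.card_eq_three.mpr ⟨A, B, C, ?_, ?_, ?_, rfl⟩
    · exact fun h => absurd (congrArg Mat.size h) (by omega)
    · exact fun h => absurd (congrArg Mat.size h) (by omega)
    · exact fun h => absurd (congrArg Mat.size h) (by omega)

/-- Given a 3-uniform hypergraph `H` on `ℕ`, the matrix `A^i` assigned to the vertex
`i`: the `(2i+1) × (2i+1)` strictly lower triangular `{0,1}`-matrix with
`A^i_{2k+1, 2j} = A^i_{2k+1, 2j+1} = 1` for every hyperedge `{j, k, i}` of `H` with
`j < k < i`, and all other entries `0`. -/
noncomputable def matOf (H : HGraph ℕ) (i : ℕ) : Mat where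
  size := 2 * i + 1
  entry := fun r c =>
    if r % 2 = 1 ∧ c / 2 < r / 2 ∧ r / 2 < i ∧ ({c / 2, r / 2, i} : Finset ℕ) ∈ H.edges
    then true else false
  lower := by
    intro r c hrc
    show (if r % 2 = 1 ∧ c / 2 < r / 2 ∧ r / 2 < i ∧ ({c / 2, r / 2, i} : Finset ℕ) ∈ H.edges
        then true else false) = false
    rw [if_neg]
    rintro ⟨h1, h2, h3, -⟩
    omega
  outside := by
    intro r c hr
    show (if r % 2 = 1 ∧ c / 2 < r / 2 ∧ r / 2 < i ∧ ({c / 2, r / 2, i} : Finset ℕ) ∈ H.edges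
        then true else false) = false
    rw [if_neg]
    rintro ⟨h1, h2, h3, -⟩
    omega

/-- The valuation tree `val(S₁, S₂)` corresponding to a vector strong subtree
`(S₁, S₂)` of `(T₁, T₂)`, as a predicate: the root of `S₂` belongs to it, and whenever
`A` belongs to it, `v ∈ S₁(|A|_{S₂})` and `{C} = ImmSucc_{S₂}(A) ∩ Succ_{T₂}(A⌢v)`,
then `C` belongs to it. -/
inductive InVal (S₁ : Set Vec) (S₂ : Set Mat) : Mat → Prop where
  | root (A : Mat) (hA : A ∈ S₂) (hroot : ∀ B ∈ S₂, A ≤ B) : InVal S₁ S₂ A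
  | step (A : Mat) (v : Vec) (C : Mat) (hA : InVal S₁ S₂ A) (hv : v ∈ S₁)
      (hlev : levelIn S₁ v = levelIn S₂ A)
      (hC : IsImmSuccIn S₂ A C ∧ matExtend A v ≤ C)
      (huniq : ∀ C' : Mat, IsImmSuccIn S₂ A C' ∧ matExtend A v ≤ C' → C' = C) :
      InVal S₁ S₂ C

/-- `(S₁, S₂)` is a vector strong subtree of the vector tree `(T₁, T₂)`:
both coordinates are strong subtrees of the respective (ambient) trees and the pair is
level compatible, i.e. `L_{T₁}(S₁) = L_{T₂}(S₂)`. -/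
def IsVecStrongPair (S₁ : Set Vec) (S₂ : Set Mat) : Prop :=
  IsStrongSubtreeOf Set.univ S₁ ∧ IsStrongSubtreeOf Set.univ S₂ ∧
    levelSetIn Set.univ S₁ = levelSetIn Set.univ S₂

/-- A subset of `T₂` is a valuation tree if it equals `val(S₁, S₂)` for some vector
strong subtree `(S₁, S₂)` of `(T₁, T₂)`. -/
def IsValTree (T : Set Mat) : Prop :=
  ∃ S₁ S₂, IsVecStrongPair S₁ S₂ ∧ T = {C | InVal S₁ S₂ C}

/-- A structural isomorphism between subtrees `T` and `T'` of `T₂`: an isomorphism of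
trees preserving relative heights of nodes such that, for all `A, B, C ∈ T` with
`|A| ≤ |B| < |C|`, one has `f(C)_{|f(B)|, |f(A)|} = C_{|B|, |A|}`. -/
structure IsStructIso (T T' : Set Mat) (f : Mat → Mat) : Prop where
  mapsTo : ∀ A ∈ T, f A ∈ T'
  injOn : ∀ A ∈ T, ∀ B ∈ T, f A = f B → A = B
  surjOn : ∀ C ∈ T', ∃ A ∈ T, f A = C
  orderIso : ∀ A ∈ T, ∀ B ∈ T, (A ≤ B ↔ f A ≤ f B)
  levelEq : ∀ A ∈ T, levelIn T A = levelIn T' (f A)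
  passing : ∀ A ∈ T, ∀ B ∈ T, ∀ C ∈ T, A.size ≤ B.size → B.size < C.size →
    (f C).entry (f B).size (f A).size = C.entry B.size A.size

/-!
In a tree of finite objects ordered by restriction (finite vectors, finite lower triangular
matrices), every finite set `L ∋ 0` of heights carries a strong subtree with level set `L`:
from a node at height `n`, follow each immediate successor `t` in the ambient tree up to the
next height of `L`, along a prescribed node `a ≥ t` of a family `P` if there is one and by
padding `t` with zeros otherwise. When the pairwise meets of `P` have their heights in `L`, the
choice of `a` does not matter and all of `P` lies in the subtree.

Take for `P₂` the matrices `A^i`, for `P₁` their rows cut to the levels, and for `L` the heights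
of the `A^i`, of their meets, and of the meets of their rows. The meets of rows at the new
heights bring no further heights: the entries of `A^i` come in equal pairs `2j, 2j+1`, so a new
height is even, and the even rows of `A^i` vanish. In the valuation tree of the resulting pair,
the node above `trunc A^i n` along row `n` of `A^i` is `trunc A^i n'`, `n'` the next level, so
the tree contains every `A^i`; its height is `|L|`, polynomial in `k`.
-/

theorem heightIn_mono {α : Type*} [PartialOrder α] {U V : Set α} (hVU : V ⊆ U)
    (hfin : ∀ x ∈ V, (predsIn U x).Finite) : heightIn V ≤ heightIn U := by
  refine iSup₂_le fun x hx => le_trans ?_ (le_iSup₂ (f := fun t (_ : t ∈ U) =>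
    (levelIn U t : ℕ∞) + 1) x (hVU hx))
  gcongr
  exact Set.ncard_le_ncard (fun y hy => ⟨hVU hy.1, hy.2⟩) (hfin x hx)

/-- Junk value `n` when `L` has no element above `n`. -/
noncomputable def nextLevel (L : Finset ℕ) (n : ℕ) : ℕ :=
  if h : ∃ m, m ∈ L ∧ n < m then Nat.find h else n

section Levels

variable {L : Finset ℕ} {m n : ℕ}

theorem nextLevel_spec (hm : m ∈ L) (hnm : n < m) :
    nextLevel L n ∈ L ∧ n < nextLevel L n ∧ nextLevel L n ≤ m := by
  have h : ∃ m, m ∈ L ∧ n < m := ⟨m, hm, hnm⟩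
  rw [nextLevel, dif_pos h]
  exact ⟨(Nat.find_spec h).1, (Nat.find_spec h).2, Nat.find_min' h ⟨hm, hnm⟩⟩

theorem exists_nextLevel_eq (h0 : 0 ∈ L) (hm : m ∈ L) (hpos : 0 < m) :
    ∃ n ∈ L, n < m ∧ nextLevel L n = m := by
  have hne : (L.filter (· < m)).Nonempty := ⟨0, Finset.mem_filter.2 ⟨h0, hpos⟩⟩
  obtain ⟨hnL, hnm⟩ := Finset.mem_filter.1 (Finset.max'_mem _ hne)
  set n := (L.filter (· < m)).max' hne
  obtain ⟨hN, hnN, hNm⟩ := nextLevel_spec hm hnm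
  refine ⟨n, hnL, hnm, le_antisymm hNm (not_lt.1 fun hlt => ?_)⟩
  exact hnN.not_ge (Finset.le_max' _ _ (Finset.mem_filter.2 ⟨hN, hlt⟩))

theorem card_filter_lt_lt_card_filter_lt (hm : m ∈ L) (hmn : m < n) :
    (L.filter (· < m)).card < (L.filter (· < n)).card :=
  Finset.card_lt_card <| (Finset.ssubset_iff_of_subset
    (Finset.monotone_filter_right L fun _ _ (h : _ < m) => h.trans hmn)).2
    ⟨m, Finset.mem_filter.2 ⟨hm, hmn⟩, by simp⟩

theorem eq_of_card_filter_lt_eq (hm : m ∈ L) (hn : n ∈ L)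
    (h : (L.filter (· < m)).card = (L.filter (· < n)).card) : m = n := by
  rcases lt_trichotomy m n with hmn | rfl | hnm
  · exact absurd h (card_filter_lt_lt_card_filter_lt hm hmn).ne
  · rfl
  · exact absurd h (card_filter_lt_lt_card_filter_lt hn hnm).ne'

theorem card_filter_lt_lt_card (hm : m ∈ L) : (L.filter (· < m)).card < L.card :=
  Finset.card_lt_card (Finset.filter_ssubset.2 ⟨m, hm, lt_irrefl m⟩)

theorem card_filter_lt_add_one (hm : m ∈ L) (hmax : ∀ n ∈ L, n ≤ m) :
    (L.filter (· < m)).card + 1 = L.card := by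
  rw [show L.filter (· < m) = L.erase m by
    ext n; simp only [Finset.mem_filter, Finset.mem_erase]
    exact ⟨fun h => ⟨h.2.ne, h.1⟩, fun h => ⟨h.2, lt_of_le_of_ne (hmax n h.2) h.1⟩⟩]
  exact Finset.card_erase_add_one hm

end Levels

/-- A tree order in which every node `a` has a restriction `trunc a n` to every height `n`,
and the nodes below `b` are exactly its restrictions. Restricting beyond `size a` pads `a`. -/
class TruncTree (α : Type*) [PartialOrder α] where
  size : α → ℕ
  trunc : α → ℕ → α
  size_trunc (a : α) (n : ℕ) : size (trunc a n) = n
  trunc_trunc (a : α) {m n : ℕ} : m ≤ n → trunc (trunc a n) m = trunc a m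
  le_iff {a b : α} : a ≤ b ↔ size a ≤ size b ∧ trunc b (size a) = a
  trunc_zero (a b : α) : trunc a 0 = trunc b 0

namespace TruncTree

attribute [simp] size_trunc

variable {α : Type*} [PartialOrder α] [TruncTree α] {a b c : α} {m n : ℕ}

theorem size_le_size (h : a ≤ b) : size a ≤ size b := (le_iff.1 h).1

theorem trunc_of_le (h : a ≤ b) : trunc b (size a) = a := (le_iff.1 h).2

@[simp] theorem trunc_size (a : α) : trunc a (size a) = a := trunc_of_le le_rfl

theorem trunc_le (a : α) (h : n ≤ size a) : trunc a n ≤ a :=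
  le_iff.2 ⟨by simpa, by simp⟩

theorem le_trunc (h : a ≤ b) (hn : size a ≤ n) : a ≤ trunc b n :=
  le_iff.2 ⟨by simpa, by rw [trunc_trunc b hn, trunc_of_le h]⟩

theorem trunc_eq_trunc_of_le (h : a ≤ b) (hn : n ≤ size a) : trunc b n = trunc a n := by
  rw [← trunc_trunc b hn, trunc_of_le h]

theorem trunc_zero_le (a b : α) : trunc a 0 ≤ b := by
  rw [trunc_zero a b]
  exact trunc_le b (Nat.zero_le _)

theorem eq_of_le_of_size_le (h : a ≤ b) (hs : size b ≤ size a) : a = b := by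
  rw [← trunc_of_le h, le_antisymm (size_le_size h) hs, trunc_size]

theorem lt_of_le_of_size_lt (h : a ≤ b) (hs : size a < size b) : a < b :=
  lt_of_le_of_ne h (by rintro rfl; exact hs.false)

theorem size_lt_size (h : a < b) : size a < size b :=
  lt_of_le_of_ne (size_le_size h.le) fun hs => h.ne (eq_of_le_of_size_le h.le hs.ge)

theorem trunc_injective (a : α) : Function.Injective (trunc a) :=
  fun m n h => by simpa using congrArg size h

theorem predsIn_univ (a : α) : predsIn Set.univ a = trunc a '' Set.Iio (size a) := by
  ext b
  refine ⟨fun ⟨_, hb⟩ => ⟨size b, size_lt_size hb, trunc_of_le hb.le⟩, ?_⟩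
  rintro ⟨n, hn, rfl⟩
  exact ⟨trivial, lt_of_le_of_size_lt (trunc_le a (le_of_lt hn)) (by simpa using hn)⟩

theorem levelIn_univ (a : α) : levelIn Set.univ a = size a := by
  rw [levelIn, predsIn_univ, Set.ncard_image_of_injective _ (trunc_injective a),
    ← Finset.coe_range, Set.ncard_coe_finset, Finset.card_range]

theorem finite_predsIn (U : Set α) (a : α) : (predsIn U a).Finite :=
  ((Set.finite_Iio (size a)).image (trunc a)).subset
    (by rw [← predsIn_univ]; exact fun b hb => ⟨trivial, hb.2⟩)

theorem size_eq_of_isImmSuccIn_univ (h : IsImmSuccIn Set.univ a b) : size b = size a + 1 := by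
  obtain ⟨-, -, hab, hmin⟩ := h
  have hlt := size_lt_size hab
  by_contra hne
  refine hmin (trunc b (size a + 1)) trivial ?_ ?_
  · exact lt_of_le_of_size_lt (le_trunc hab.le (Nat.le_succ _)) (by simp)
  · exact lt_of_le_of_size_lt (trunc_le b hlt) (by simp; omega)

noncomputable def meetSize (a b : α) : ℕ :=
  Nat.findGreatest (fun n => trunc a n = trunc b n) (min (size a) (size b))

theorem trunc_meetSize (a b : α) : trunc a (meetSize a b) = trunc b (meetSize a b) :=
  Nat.findGreatest_spec (P := fun n => trunc a n = trunc b n) (Nat.zero_le _) (trunc_zero a b)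

theorem meetSize_le_left (a b : α) : meetSize a b ≤ size a :=
  (Nat.findGreatest_le _).trans (min_le_left _ _)

theorem meetSize_le_right (a b : α) : meetSize a b ≤ size b :=
  (Nat.findGreatest_le _).trans (min_le_right _ _)

theorem le_meetSize (h : trunc a n = trunc b n) (ha : n ≤ size a) (hb : n ≤ size b) :
    n ≤ meetSize a b :=
  Nat.le_findGreatest (le_min ha hb) h

theorem size_le_meetSize (ha : c ≤ a) (hb : c ≤ b) : size c ≤ meetSize a b :=
  le_meetSize (by rw [trunc_of_le ha, trunc_of_le hb]) (size_le_size ha) (size_le_size hb)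

theorem meetSize_self (a : α) : meetSize a a = size a :=
  le_antisymm (meetSize_le_left a a) (le_meetSize rfl le_rfl le_rfl)

theorem trunc_eq_trunc_of_le_meetSize (h : n ≤ meetSize a b) : trunc a n = trunc b n := by
  rw [← trunc_trunc a h, trunc_meetSize, trunc_trunc b h]

theorem isMeetIn_univ (a b : α) : IsMeetIn Set.univ a b (trunc a (meetSize a b)) :=
  ⟨trivial, trunc_le a (meetSize_le_left a b),
    trunc_meetSize a b ▸ trunc_le b (meetSize_le_right a b),
    fun _ _ ha hb => le_trunc ha (size_le_meetSize ha hb)⟩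

theorem meetSize_trunc_trunc (ha : m ≤ size a) (hb : n ≤ size b) :
    meetSize (trunc a m) (trunc b n) = min (min m n) (meetSize a b) := by
  refine le_antisymm ?_ ?_
  · have hc := isMeetIn_univ (trunc a m) (trunc b n)
    refine le_min (le_min ?_ ?_) ?_
    · simpa using meetSize_le_left (trunc a m) (trunc b n)
    · simpa using meetSize_le_right (trunc a m) (trunc b n)
    · simpa using size_le_meetSize (hc.2.1.trans (trunc_le a ha)) (hc.2.2.1.trans (trunc_le b hb))
  · refine le_meetSize ?_ (by simp) (by simp)
    rw [trunc_trunc a (by omega), trunc_trunc b (by omega)]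
    exact trunc_eq_trunc_of_le_meetSize (by omega)

variable (L : Finset ℕ) (P : Set α)

noncomputable def extend (n : ℕ) (t : α) : α :=
  if h : ∃ a ∈ P, t ≤ a then trunc h.choose (nextLevel L n) else trunc t (nextLevel L n)

def envelope : Set α :=
  {x | size x ∈ L ∧ ∀ n ∈ L, n < size x → extend L P n (trunc x (n + 1)) ≤ x}

variable {L P} {t x y : α}

@[simp] theorem size_extend : size (extend L P n t) = nextLevel L n := by
  unfold extend; split_ifs <;> simp

theorem le_extend (ht : size t ≤ nextLevel L n) : t ≤ extend L P n t := by
  unfold extend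
  split_ifs with h
  · exact le_trunc h.choose_spec.2 ht
  · exact le_trunc le_rfl ht

theorem extend_trunc_of_mem (hP : ∀ a ∈ P, ∀ b ∈ P, meetSize a b ∈ L) (ha : a ∈ P)
    (hn : n < size a) : extend L P n (trunc a (n + 1)) = trunc a (nextLevel L n) := by
  have h : ∃ b ∈ P, trunc a (n + 1) ≤ b := ⟨a, ha, trunc_le a hn⟩
  rw [extend, dif_pos h]
  obtain ⟨hb, hab⟩ := h.choose_spec
  have hmeet : n < meetSize a h.choose := by
    simpa using size_le_meetSize (trunc_le a hn) hab
  exact (trunc_eq_trunc_of_le_meetSize (nextLevel_spec (hP a ha _ hb) hmeet).2.2).symm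

theorem mem_envelope_of_mem (hP : ∀ a ∈ P, ∀ b ∈ P, meetSize a b ∈ L) (ha : a ∈ P) :
    a ∈ envelope L P := by
  have hsize : size a ∈ L := meetSize_self a ▸ hP a ha a ha
  refine ⟨hsize, fun n _ hn => ?_⟩
  rw [extend_trunc_of_mem hP ha hn]
  exact trunc_le a (nextLevel_spec hsize hn).2.2

theorem trunc_mem_envelope (hx : x ∈ envelope L P) (hm : m ∈ L) (hmx : m ≤ size x) :
    trunc x m ∈ envelope L P := by
  refine ⟨by simpa, fun n hn hnm => ?_⟩
  simp only [size_trunc] at hnm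
  rw [trunc_trunc x hnm]
  exact le_trunc (hx.2 n hn (hnm.trans_le hmx)) (by simpa using (nextLevel_spec hm hnm).2.2)

theorem extend_mem_envelope (hx : x ∈ envelope L P) (hxt : x ≤ t) (ht : size t = size x + 1)
    (hm : m ∈ L) (hxm : size x < m) : extend L P (size x) t ∈ envelope L P := by
  obtain ⟨hN, hxN, -⟩ := nextLevel_spec hm hxm
  have hty : t ≤ extend L P (size x) t := le_extend (by omega)
  refine ⟨by simpa, fun n hn hny => ?_⟩
  rw [size_extend] at hny
  rcases lt_or_eq_of_le (not_lt.1 fun h => (nextLevel_spec hn h).2.2.not_gt hny) with h | rfl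
  · rw [trunc_eq_trunc_of_le (hxt.trans hty) h]
    exact (hx.2 n hn h).trans (hxt.trans hty)
  · rw [← ht, trunc_of_le hty]

theorem isImmSuccIn_extend (hx : x ∈ envelope L P) (hxt : x ≤ t) (ht : size t = size x + 1)
    (hm : m ∈ L) (hxm : size x < m) :
    IsImmSuccIn (envelope L P) x (extend L P (size x) t) ∧ t ≤ extend L P (size x) t := by
  obtain ⟨-, hxN, -⟩ := nextLevel_spec (L := L) hm hxm
  have hty : t ≤ extend L P (size x) t := le_extend (by omega)
  refine ⟨⟨hx, extend_mem_envelope hx hxt ht hm hxm,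
    lt_of_le_of_size_lt (hxt.trans hty) (by simpa), fun u hu hxu huy => ?_⟩, hty⟩
  have h₁ := size_lt_size hxu
  have h₂ := size_lt_size huy
  rw [size_extend] at h₂
  exact (nextLevel_spec hu.1 h₁).2.2.not_gt h₂

theorem eq_extend_of_isImmSuccIn (hx : x ∈ envelope L P) (hy : IsImmSuccIn (envelope L P) x y)
    (hty : t ≤ y) (ht : size t = size x + 1) : y = extend L P (size x) t := by
  obtain ⟨-, hyE, hxy, hmin⟩ := hy
  obtain ⟨hN, hxN, hNy⟩ := nextLevel_spec hyE.1 (size_lt_size hxy)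
  have hsize : size y = nextLevel L (size x) := by
    refine le_antisymm (not_lt.1 fun hlt => hmin _ (trunc_mem_envelope hyE hN hNy) ?_ ?_) hNy
    · exact lt_of_le_of_size_lt (le_trunc hxy.le hxN.le) (by simpa)
    · exact lt_of_le_of_size_lt (trunc_le y hNy) (by simpa)
  have hext := hyE.2 (size x) hx.1 (size_lt_size hxy)
  rw [← ht, trunc_of_le hty] at hext
  exact (eq_of_le_of_size_le hext (by rw [hsize, size_extend])).symm

theorem predsIn_envelope (hx : x ∈ envelope L P) :
    predsIn (envelope L P) x = trunc x '' ↑(L.filter (· < size x)) := by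
  ext y
  refine ⟨fun ⟨hy, hyx⟩ => ⟨size y, by simpa using ⟨hy.1, size_lt_size hyx⟩, trunc_of_le hyx.le⟩,
    ?_⟩
  rintro ⟨n, hn, rfl⟩
  obtain ⟨hnL, hnx⟩ : n ∈ L ∧ n < size x := by simpa using hn
  exact ⟨trunc_mem_envelope hx hnL hnx.le, lt_of_le_of_size_lt (trunc_le x hnx.le) (by simpa)⟩

theorem levelIn_envelope (hx : x ∈ envelope L P) :
    levelIn (envelope L P) x = (L.filter (· < size x)).card := by
  rw [levelIn, predsIn_envelope hx, Set.ncard_image_of_injective _ (trunc_injective x),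
    Set.ncard_coe_finset]

theorem le_size_of_isMaximalIn (hx : IsMaximalIn (envelope L P) x) (hm : m ∈ L) : m ≤ size x := by
  refine not_lt.1 fun hxm => ?_
  have hxt : x ≤ trunc x (size x + 1) := le_trunc le_rfl (Nat.le_succ _)
  have hnext := (nextLevel_spec hm hxm).2.1
  refine hx.2 _ (extend_mem_envelope hx.1 hxt (size_trunc x _) hm hxm)
    (lt_of_le_of_size_lt (hxt.trans (le_extend (by simpa))) (by simpa))

theorem meetSize_mem (h0 : 0 ∈ L) (hx : x ∈ envelope L P) (hy : y ∈ envelope L P) :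
    meetSize x y ∈ L := by
  have hne : (L.filter (· ≤ meetSize x y)).Nonempty := ⟨0, by simpa using h0⟩
  obtain ⟨hcL, hcM⟩ := Finset.mem_filter.1 (Finset.max'_mem _ hne)
  set c := (L.filter (· ≤ meetSize x y)).max' hne
  rcases lt_or_eq_of_le hcM with hlt | heq
  -- otherwise `x` and `y` agree at `c + 1`, so both pass through the same node at the next level
  · have hcx : c < size x := hlt.trans_le (meetSize_le_left x y)
    have hcy : c < size y := hlt.trans_le (meetSize_le_right x y)
    have hxy : trunc x (c + 1) = trunc y (c + 1) := trunc_eq_trunc_of_le_meetSize hlt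
    have hex := hx.2 c hcL hcx
    have hey := hy.2 c hcL hcy
    rw [← hxy] at hey
    obtain ⟨hN, hcN, -⟩ := nextLevel_spec hx.1 hcx
    have hNM : nextLevel L c ≤ meetSize x y := by simpa using size_le_meetSize hex hey
    exact absurd (Finset.le_max' _ _ (Finset.mem_filter.2 ⟨hN, hNM⟩)) hcN.not_ge
  · exact heq ▸ hcL

variable [Nonempty α]

theorem exists_mem_envelope_size_eq (h0 : 0 ∈ L) (hm : m ∈ L) :
    ∃ x ∈ envelope L P, size x = m := by
  induction m using Nat.strong_induction_on with
  | _ m ih =>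
    rcases Nat.eq_zero_or_pos m with rfl | hpos
    · exact ⟨trunc (Classical.arbitrary α) 0, ⟨by simpa, fun n _ hn => by simp at hn⟩, by simp⟩
    · obtain ⟨n, hn, hnm, rfl⟩ := exists_nextLevel_eq h0 hm hpos
      obtain ⟨x, hx, rfl⟩ := ih _ hnm hn
      exact ⟨_, extend_mem_envelope hx (le_trunc le_rfl (Nat.le_succ _)) (size_trunc x _) hm hnm,
        size_extend⟩

theorem levelSetIn_envelope (h0 : 0 ∈ L) : levelSetIn Set.univ (envelope L P) = ↑L := by
  ext m
  simp only [levelSetIn, levelIn_univ, Set.mem_image, Finset.mem_coe]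
  exact ⟨fun ⟨x, hx, hxm⟩ => hxm ▸ hx.1, fun hm => exists_mem_envelope_size_eq h0 hm⟩

theorem heightIn_envelope (h0 : 0 ∈ L) : heightIn (envelope L P) = L.card := by
  refine le_antisymm (iSup₂_le fun x hx => ?_) ?_
  · rw [levelIn_envelope hx]
    exact_mod_cast card_filter_lt_lt_card hx.1
  · have hL : L.Nonempty := ⟨0, h0⟩
    obtain ⟨x, hx, hxm⟩ := exists_mem_envelope_size_eq (P := P) h0 (L.max'_mem hL)
    refine le_trans ?_ (le_iSup₂ (f := fun t (_ : t ∈ envelope L P) =>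
      (levelIn (envelope L P) t : ℕ∞) + 1) x hx)
    rw [levelIn_envelope hx, hxm]
    exact_mod_cast (card_filter_lt_add_one (L.max'_mem hL) (L.le_max' · ·)).ge

theorem isStrongSubtreeOf_envelope (h0 : 0 ∈ L) : IsStrongSubtreeOf Set.univ (envelope L P) := by
  refine ⟨⟨Set.subset_univ _, fun x hx y hy =>
    ⟨_, trunc_mem_envelope hx (meetSize_mem h0 hx hy) (meetSize_le_left x y), isMeetIn_univ x y⟩⟩,
    Or.inr ⟨?_, ?_, ?_, ?_⟩⟩
  · obtain ⟨r, hr, -⟩ := exists_mem_envelope_size_eq (P := P) h0 h0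
    exact ⟨trunc r 0, trunc_mem_envelope hr h0 (Nat.zero_le _), fun y _ => trunc_zero_le r y⟩
  · refine Or.inr ⟨by simp [heightIn_envelope h0], fun x hx => ?_⟩
    rw [heightIn_envelope h0, levelIn_envelope hx.1]
    exact_mod_cast card_filter_lt_add_one hx.1.1 fun m hm => le_size_of_isMaximalIn hx hm
  · intro x hx y hy hxy
    rw [levelIn_envelope hx, levelIn_envelope hy] at hxy
    rw [levelIn_univ, levelIn_univ, eq_of_card_filter_lt_eq hx.1 hy.1 hxy]
  · intro x hx hmax t ht
    obtain ⟨y, hy, hxy⟩ : ∃ y ∈ envelope L P, x < y := by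
      by_contra! h
      exact hmax ⟨hx, fun y hy hxy => (h y hy hxy).elim⟩
    have := size_eq_of_isImmSuccIn_univ ht
    refine ⟨_, isImmSuccIn_extend hx ht.2.2.1.le this hy.1 (size_lt_size hxy),
      fun c hc => eq_extend_of_isImmSuccIn hx hc.1 hc.2 this⟩

end TruncTree

open TruncTree

theorem Vec.ext_of_lt {u w : Vec} (h : u.len = w.len)
    (he : ∀ i < u.len, u.entry i = w.entry i) : u = w :=
  le_antisymm (⟨h.le, he⟩ : u.len ≤ w.len ∧ ∀ i < u.len, u.entry i = w.entry i)
    ⟨h.ge, fun i hi => (he i (h ▸ hi)).symm⟩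

theorem Mat.ext_of_lt {A B : Mat} (h : A.size = B.size)
    (he : ∀ i j, i < A.size → j < A.size → A.entry i j = B.entry i j) : A = B :=
  le_antisymm (⟨h.le, he⟩ : A.size ≤ B.size ∧ ∀ i j, i < A.size → j < A.size → _)
    ⟨h.ge, fun i j hi hj => (he i j (h ▸ hi) (h ▸ hj)).symm⟩

instance : Nonempty Vec := ⟨⟨0, fun _ => false, fun _ _ => rfl⟩⟩

instance : Nonempty Mat := ⟨⟨0, fun _ _ => false, fun _ _ _ => rfl, fun _ _ _ => rfl⟩⟩

instance : TruncTree Vec where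
  size := Vec.len
  trunc u n := ⟨n, fun i => if i < n then u.entry i else false, fun _ _ => if_neg (by omega)⟩
  size_trunc _ _ := rfl
  trunc_trunc u m n h := Vec.ext_of_lt rfl fun i (hi : i < m) => by
    simp [hi, show i < n by omega]
  le_iff {u w} := by
    refine ⟨fun h => ⟨h.1, Vec.ext_of_lt rfl fun i (hi : i < u.len) => by simp [hi, h.2 i hi]⟩,
      fun ⟨hl, he⟩ => ⟨hl, fun i hi => ?_⟩⟩
    have := congrArg (Vec.entry · i) he
    simp only [hi, if_true] at this
    exact this.symm
  trunc_zero _ _ := Vec.ext_of_lt rfl fun _ h => absurd h (Nat.not_lt_zero _)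

instance : TruncTree Mat where
  size := Mat.size
  trunc A n := ⟨n, fun i j => if i < n then A.entry i j else false,
    fun i j hij => by split_ifs <;> simp [A.lower i j hij], fun _ _ _ => if_neg (by omega)⟩
  size_trunc _ _ := rfl
  trunc_trunc A m n h := Mat.ext_of_lt rfl fun i j (hi : i < m) _ => by
    simp [hi, show i < n by omega]
  le_iff {A B} := by
    refine ⟨fun h => ⟨h.1, Mat.ext_of_lt rfl fun i j (hi : i < A.size) hj => by
      simp [hi, h.2 i j hi hj]⟩, fun ⟨hl, he⟩ => ⟨hl, fun i j hi _ => ?_⟩⟩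
    have := congrArg (Mat.entry · i j) he
    simp only [hi, if_true] at this
    exact this.symm
  trunc_zero _ _ := Mat.ext_of_lt rfl fun _ _ h => absurd h (Nat.not_lt_zero _)

@[simp] theorem Vec.size_eq (u : Vec) : size u = u.len := rfl

@[simp] theorem Vec.entry_trunc (u : Vec) (n i : ℕ) :
    (trunc u n).entry i = if i < n then u.entry i else false := rfl

@[simp] theorem Mat.size_trunc (A : Mat) (n : ℕ) : (trunc A n).size = n := rfl

@[simp] theorem Mat.entry_trunc (A : Mat) (n i j : ℕ) :
    (trunc A n).entry i j = if i < n then A.entry i j else false := rfl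

theorem Vec.trunc_eq_trunc_iff {u w : Vec} {n : ℕ} :
    trunc u n = trunc w n ↔ ∀ i < n, u.entry i = w.entry i := by
  refine ⟨fun h i hi => by simpa [hi] using congrArg (Vec.entry · i) h, fun h => ?_⟩
  exact Vec.ext_of_lt rfl fun i (hi : i < n) => by simp [hi, h i hi]

theorem Vec.even_meetSize_or {u w : Vec} (hu : ∀ j, u.entry (2 * j + 1) = u.entry (2 * j))
    (hw : ∀ j, w.entry (2 * j + 1) = w.entry (2 * j)) :
    Even (meetSize u w) ∨ meetSize u w = min u.len w.len := by
  rcases Nat.even_or_odd (meetSize u w) with he | ⟨j, hj⟩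
  · exact Or.inl he
  refine Or.inr (le_antisymm (le_min (meetSize_le_left u w) (meetSize_le_right u w))
    (not_lt.1 fun hlt => ?_))
  have hagree := Vec.trunc_eq_trunc_iff.1 (trunc_meetSize u w)
  have hnext : meetSize u w + 1 ≤ meetSize u w := by
    refine le_meetSize (Vec.trunc_eq_trunc_iff.2 fun i hi => ?_) (by simp; omega) (by simp; omega)
    rcases Nat.lt_succ_iff_lt_or_eq.1 hi with hi | rfl
    · exact hagree i hi
    · rw [hj, hu, hw]
      exact hagree _ (by omega)
  omega

theorem matExtend_trunc_rowOf (A : Mat) (p : ℕ) :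
    matExtend (trunc A p) (trunc (rowOf A p) p) = trunc A (p + 1) := by
  refine Mat.ext_of_lt rfl fun i j (hi : i < p + 1) (hj : j < p + 1) => ?_
  simp only [matExtend, Mat.size_trunc, Mat.entry_trunc, Vec.entry_trunc, rowOf, hi, if_true]
  split_ifs with _ h₂
  · rfl
  · rw [h₂.1]
  · omega
  · rw [show i = p by omega]
    exact (A.lower p j (by omega)).symm

theorem matOf_entry_of_even (H : HGraph ℕ) (i : ℕ) {r : ℕ} (hr : r % 2 = 0) (c : ℕ) :
    (matOf H i).entry r c = false := by
  simp only [matOf]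
  rw [if_neg (by omega)]

theorem matOf_entry_odd (H : HGraph ℕ) (i r j : ℕ) :
    (matOf H i).entry r (2 * j + 1) = (matOf H i).entry r (2 * j) := by
  simp only [matOf, show (2 * j + 1) / 2 = j by omega, show 2 * j / 2 = j by omega]

theorem rowOf_matOf_of_even (H : HGraph ℕ) (i : ℕ) {r : ℕ} (hr : r % 2 = 0) :
    rowOf (matOf H i) r = rowOf (matOf H i) 0 :=
  Vec.ext_of_lt rfl fun c _ => by
    simp only [rowOf, matOf_entry_of_even H i hr, matOf_entry_of_even H i (Nat.zero_mod 2)]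

section Hypergraph

variable (H : HGraph ℕ) (S : Finset ℕ)

noncomputable def baseLevels : Finset ℕ :=
  insert 0 (S.image (2 * · + 1)) ∪ (S ×ˢ S).image fun p => meetSize (matOf H p.1) (matOf H p.2)

noncomputable def rowLevels : Finset ℕ :=
  ((S ×ˢ baseLevels H S) ×ˢ (S ×ˢ baseLevels H S)).image fun p =>
    meetSize (rowOf (matOf H p.1.1) p.1.2) (rowOf (matOf H p.2.1) p.2.2)

noncomputable def levels : Finset ℕ := baseLevels H S ∪ rowLevels H S

def matFamily : Set Mat := matOf H '' S

/-- The vectors `v` with `trunc A^i m ⌢ v ≤ A^i` for a level `m`. -/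
def rowFamily : Set Vec :=
  {v | ∃ i ∈ S, ∃ m ∈ levels H S, m < 2 * i + 1 ∧ v = trunc (rowOf (matOf H i) m) m}

variable {H S}

theorem zero_mem_levels : 0 ∈ levels H S :=
  Finset.mem_union_left _ (Finset.mem_union_left _ (Finset.mem_insert_self _ _))

theorem two_mul_add_one_mem_baseLevels {i : ℕ} (hi : i ∈ S) : 2 * i + 1 ∈ baseLevels H S :=
  Finset.mem_union_left _ (Finset.mem_insert_of_mem (Finset.mem_image_of_mem _ hi))

theorem card_levels_le {k : ℕ} (hS : S.card = k) :
    (levels H S).card ≤ (1 + k + k * k) + (k * (1 + k + k * k)) ^ 2 := by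
  have hbase : (baseLevels H S).card ≤ 1 + k + k * k := by
    refine (Finset.card_union_le _ _).trans (add_le_add ((Finset.card_insert_le _ _).trans ?_) ?_)
    · have := Finset.card_image_le (s := S) (f := (2 * · + 1))
      omega
    · exact Finset.card_image_le.trans (by rw [Finset.card_product, hS])
  have hrow : (rowLevels H S).card ≤ (k * (1 + k + k * k)) ^ 2 := by
    refine Finset.card_image_le.trans ?_
    rw [Finset.card_product, Finset.card_product, hS, sq]
    exact Nat.mul_le_mul (Nat.mul_le_mul_left k hbase) (Nat.mul_le_mul_left k hbase)
  exact (Finset.card_union_le _ _).trans (add_le_add hbase hrow)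

theorem meetSize_mem_levels_of_matFamily :
    ∀ a ∈ matFamily H S, ∀ b ∈ matFamily H S, meetSize a b ∈ levels H S := by
  rintro _ ⟨i, hi, rfl⟩ _ ⟨i', hi', rfl⟩
  exact Finset.mem_union_left _ (Finset.mem_union_right _
    (Finset.mem_image.2 ⟨(i, i'), Finset.mem_product.2 ⟨hi, hi'⟩, rfl⟩))

theorem exists_rowOf_eq_of_mem_levels {m : ℕ} (hm : m ∈ levels H S) :
    ∃ m' ∈ baseLevels H S, ∀ i, rowOf (matOf H i) m = rowOf (matOf H i) m' := by
  rcases Finset.mem_union.1 hm with hm | hm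
  · exact ⟨m, hm, fun _ => rfl⟩
  by_cases hbase : m ∈ baseLevels H S
  · exact ⟨m, hbase, fun _ => rfl⟩
  refine ⟨0, Finset.mem_union_left _ (Finset.mem_insert_self _ _), fun i => ?_⟩
  obtain ⟨⟨⟨j, r⟩, ⟨j', r'⟩⟩, hp, rfl⟩ := Finset.mem_image.1 hm
  simp only [Finset.mem_product] at hp
  refine rowOf_matOf_of_even H i ?_
  rcases Vec.even_meetSize_or (u := rowOf (matOf H j) r) (w := rowOf (matOf H j') r')
    (matOf_entry_odd H j r) (matOf_entry_odd H j' r') with he | hmin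
  · exact Nat.even_iff.1 he
  · refine absurd ?_ hbase
    rw [hmin]
    rcases min_choice (2 * j + 1) (2 * j' + 1) with h | h
    · exact h ▸ two_mul_add_one_mem_baseLevels hp.1.1
    · exact h ▸ two_mul_add_one_mem_baseLevels hp.2.1

theorem meetSize_mem_levels_of_rowFamily :
    ∀ a ∈ rowFamily H S, ∀ b ∈ rowFamily H S, meetSize a b ∈ levels H S := by
  rintro _ ⟨i, hi, m, hm, hmi, rfl⟩ _ ⟨i', hi', m', hm', hmi', rfl⟩
  rw [meetSize_trunc_trunc (a := rowOf (matOf H i) m) hmi.le hmi'.le]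
  obtain ⟨n, hn, hrow⟩ := exists_rowOf_eq_of_mem_levels hm
  obtain ⟨n', hn', hrow'⟩ := exists_rowOf_eq_of_mem_levels hm'
  have hmeet : meetSize (rowOf (matOf H i) n) (rowOf (matOf H i') n') ∈ levels H S :=
    Finset.mem_union_right _ (Finset.mem_image.2 ⟨((i, n), (i', n')), by simp [*], rfl⟩)
  rw [hrow i, hrow' i']
  rcases min_choice (min m m') (meetSize (rowOf (matOf H i) n) (rowOf (matOf H i') n')) with h | h
  · rcases min_choice m m' with h' | h' <;> rw [h, h'] <;> assumption
  · rwa [h]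

theorem InVal.mem {S₁ : Set Vec} {S₂ : Set Mat} {C : Mat} (h : InVal S₁ S₂ C) : C ∈ S₂ := by
  induction h with
  | root _ hA _ => exact hA
  | step _ _ _ _ _ _ hC _ _ => exact hC.1.2.1

theorem inVal_trunc_matOf {i : ℕ} (hi : i ∈ S) {n : ℕ} (hn : n ∈ levels H S)
    (hni : n ≤ 2 * i + 1) :
    InVal (envelope (levels H S) (rowFamily H S)) (envelope (levels H S) (matFamily H S))
      (trunc (matOf H i) n) := by
  induction n using Nat.strong_induction_on with
  | _ n ih =>
  have hA : matOf H i ∈ envelope (levels H S) (matFamily H S) :=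
    mem_envelope_of_mem meetSize_mem_levels_of_matFamily ⟨i, hi, rfl⟩
  rcases Nat.eq_zero_or_pos n with rfl | hpos
  · exact InVal.root _ (trunc_mem_envelope hA zero_mem_levels (Nat.zero_le _))
      fun B _ => trunc_zero_le _ B
  obtain ⟨p, hp, hpn, rfl⟩ := exists_nextLevel_eq zero_mem_levels hn hpos
  have hpi : p < size (matOf H i) := show p < 2 * i + 1 by omega
  have hB := trunc_mem_envelope hA hp hpi.le
  have hv : trunc (rowOf (matOf H i) p) p ∈ envelope (levels H S) (rowFamily H S) :=
    mem_envelope_of_mem meetSize_mem_levels_of_rowFamily ⟨i, hi, p, hp, hpi, rfl⟩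
  have ht := matExtend_trunc_rowOf (matOf H i) p
  have hC : extend (levels H S) (matFamily H S) (size (trunc (matOf H i) p))
      (trunc (matOf H i) (p + 1)) = trunc (matOf H i) (nextLevel (levels H S) p) := by
    rw [size_trunc]
    exact extend_trunc_of_mem meetSize_mem_levels_of_matFamily ⟨i, hi, rfl⟩ hpi
  have hBt : trunc (matOf H i) p ≤ trunc (matOf H i) (p + 1) :=
    le_trunc (trunc_le _ hpi.le) (by simp)
  have hsucc := isImmSuccIn_extend hB hBt (by simp) hn (by simpa using hpn)
  rw [hC] at hsucc
  refine InVal.step _ _ _ (ih p hpn hp (by omega)) hv ?_ (ht ▸ hsucc) fun C' hC' => ?_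
  · rw [levelIn_envelope hv, levelIn_envelope hB]
    simp
  · rw [← hC]
    exact eq_extend_of_isImmSuccIn hB hC'.1 (ht ▸ hC'.2) (by simp)

theorem inVal_matOf {i : ℕ} (hi : i ∈ S) :
    InVal (envelope (levels H S) (rowFamily H S)) (envelope (levels H S) (matFamily H S))
      (matOf H i) := by
  simpa using inVal_trunc_matOf (H := H) hi (n := size (matOf H i))
    (Finset.mem_union_left _ (two_mul_add_one_mem_baseLevels hi)) le_rfl

end Hypergraph

/-- For every `k` there is `R k` such that for every 3-uniform hypergraph `H` on `ℕ` and
every set `S ⊆ ℕ` of size `k` there is a valuation tree of height at most `R k`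
containing all the matrices `A^i` for `i ∈ S`. -/
theorem exists_bounded_valuation_tree_envelope (k : ℕ) :
    ∃ R : ℕ, ∀ (H : HGraph ℕ) (S : Finset ℕ), S.card = k →
      ∃ T : Set Mat, IsValTree T ∧ heightIn T ≤ (R : ℕ∞) ∧
        ∀ i ∈ S, matOf H i ∈ T := by
  refine ⟨(1 + k + k * k) + (k * (1 + k + k * k)) ^ 2, fun H S hS => ?_⟩
  set S₁ := envelope (levels H S) (rowFamily H S)
  set S₂ := envelope (levels H S) (matFamily H S)
  have hpair : IsVecStrongPair S₁ S₂ :=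
    ⟨isStrongSubtreeOf_envelope zero_mem_levels, isStrongSubtreeOf_envelope zero_mem_levels,
      by rw [levelSetIn_envelope zero_mem_levels, levelSetIn_envelope zero_mem_levels]⟩
  refine ⟨{C | InVal S₁ S₂ C}, ⟨S₁, S₂, hpair, rfl⟩, ?_, fun i hi => inVal_matOf hi⟩
  calc heightIn {C | InVal S₁ S₂ C}
      ≤ heightIn S₂ := heightIn_mono (fun _ => InVal.mem) fun x _ => finite_predsIn S₂ x
    _ = (levels H S).card := heightIn_envelope zero_mem_levels
    _ ≤ _ := by exact_mod_cast card_levels_le hS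
end
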